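/- arXiv:2603.04271 — 2 statements merged into one kernel-verified Lean document; each statement's English description precedes it below -/
import Mathlib

section
/- Let N ∈ ℕ, let F be a nonempty skew finite subset of ℓ1^N with m := |F|, and let r ∈ (0, skew(F)/2). Then the 2^N·m points p + rs (p ∈ F, s ∈ {−1,1}^N) are pairwise distinct, the coefficient matrix of the Vertex System is the similarity matrix (e^{−d1(p+rs, q+rt)})_{(p,s),(q,t)} of this vertex set, this matrix is positive definite (hence invertible), and consequently the Vertex System has a unique solution. -/
/-!
After the substitution `u = e^{2x}`, `e^{-|x - y|} = e^{-x} e^{-y} min (u, u')`, so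
`e^{-d1(x, y)}` is, up to the factors `e^{-∑ xₖ}` and `e^{-∑ yₖ}`, the volume
`∏ₖ min (uₖ, u'ₖ)` of the intersection of the boxes `∏ₖ (0, uₖ]` and `∏ₖ (0, u'ₖ]`, i.e. the
`L²` inner product of their indicators. The similarity matrix of distinct points is therefore a
Gram matrix, and it is positive definite because indicators of boxes with distinct corners are
linearly independent: just below the corner of a box that is maximal among those with nonzero
coefficient, no other such box is present. Since `2r < skew(F)`, the vertices `p + rs` are
distinct, and the Vertex System reads `xᵀ A = b` for this invertible matrix `A`.
-/

open Metric Set Filter Topology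
open scoped ENNReal Classical

/-- The 1-metric on `ℝ^N`. -/
noncomputable def d1 {N : ℕ} (x y : Fin N → ℝ) : ℝ := ∑ k, |x k - y k|

/-- The infimum of 1-distances from points of `A` to `y`. -/
noncomputable def d1Inf {N : ℕ} (A : Set (Fin N → ℝ)) (y : Fin N → ℝ) : ℝ :=
  sInf ((fun z => d1 z y) '' A)

/-- The skewness of a set `S ⊆ ℝ^N`. -/
noncomputable def skewness {N : ℕ} (S : Set (Fin N → ℝ)) : ℝ≥0∞ :=
  ⨅ (a : S) (b : S) (_ : a ≠ b) (k : Fin N), ENNReal.ofReal |a.1 k - b.1 k|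

/-- A set is skew when its skewness is positive. -/
def IsSkew {N : ℕ} (S : Set (Fin N → ℝ)) : Prop := 0 < skewness S

/-- The closed cube with center `p` and "radius" `r`. -/
def cube {N : ℕ} (p : Fin N → ℝ) (r : ℝ) : Set (Fin N → ℝ) :=
  {x | ∀ k, x k ∈ Set.Icc (p k - r) (p k + r)}

/-- The sign vector associated to `s : Fin N → Bool` (`true ↦ 1`, `false ↦ -1`). -/
def sgnVec {N : ℕ} (s : Fin N → Bool) : Fin N → ℝ := fun k => if s k then 1 else -1

/-- The Vertex System: for every `q ∈ F` and `t ∈ {-1,1}^N`,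
`∑_{p ∈ F, s ∈ {-1,1}^N} x p s · e^{-d1(p+rs, q+rt)} = ∑_{p ∈ F \ {q}} e^{-d1(C̄_p(r), q+rt)}`. -/
def VertexSystem {N : ℕ} (F : Finset (Fin N → ℝ)) (r : ℝ)
    (x : (Fin N → ℝ) → (Fin N → Bool) → ℝ) : Prop :=
  ∀ q ∈ F, ∀ t : Fin N → Bool,
    (∑ p ∈ F, ∑ s : Fin N → Bool,
        x p s * Real.exp (-d1 (p + r • sgnVec s) (q + r • sgnVec t))) =
      ∑ p ∈ F.erase q, Real.exp (-d1Inf (cube p r) (q + r • sgnVec t))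

open MeasureTheory Matrix Function

section OrthantBox

variable {κ ι : Type*} [Fintype ι]

def orthantBox (u : κ → ℝ) : Set (κ → ℝ) := univ.pi fun k => Ioc 0 (u k)

lemma orthantBox_inter (u w : κ → ℝ) : orthantBox u ∩ orthantBox w = orthantBox (u ⊓ w) := by
  simp [orthantBox, ← pi_inter_distrib, Ioc_inter_Ioc]

lemma sum_indicator_orthantBox_eq_of_maximalFor {u : ι → κ → ℝ} (hu : Injective u) {d : ι → ℝ}
    {a : ι} (ha : MaximalFor (fun b => d b ≠ 0) u a) {ε : ℝ}
    (hε : ∀ k, ε < u a k ∧ ∀ b, u b k < u a k → u b k < u a k - ε) {x : κ → ℝ}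
    (hx : x ∈ univ.pi fun k => Ioo (u a k - ε) (u a k)) :
    ∑ b, d b * (orthantBox (u b)).indicator 1 x = d a := by
  simp only [Set.mem_pi, mem_univ, mem_Ioo, forall_const] at hx
  rw [Finset.sum_eq_single a]
  · rw [indicator_of_mem fun k _ => ⟨by linarith [(hε k).1, (hx k).1], (hx k).2.le⟩,
      Pi.one_apply, mul_one]
  · intro b _ hba
    by_cases hdb : d b = 0
    · rw [hdb, zero_mul]
    rw [indicator_of_notMem, mul_zero]
    intro hxb
    have hab : u a ≤ u b := fun k => not_lt.1 fun hlt => by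
      linarith [(hε k).2 b hlt, (hxb k trivial).2, (hx k).1]
    exact hba (hu (le_antisymm (ha.2 hdb hab) hab))
  · exact fun h => absurd (Finset.mem_univ a) h

variable [Fintype κ]

lemma measurableSet_orthantBox (u : κ → ℝ) : MeasurableSet (orthantBox u) :=
  .univ_pi fun _ => measurableSet_Ioc

lemma volume_orthantBox (u : κ → ℝ) : volume (orthantBox u) = ∏ k, ENNReal.ofReal (u k) := by
  simp [orthantBox, Real.volume_pi_Ioc]

lemma volume_orthantBox_ne_top (u : κ → ℝ) : volume (orthantBox u) ≠ ⊤ := by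
  rw [volume_orthantBox]
  exact ENNReal.prod_ne_top fun _ _ => ENNReal.ofReal_ne_top

noncomputable def orthantBoxL2 (u : κ → ℝ) : Lp ℝ 2 (volume : Measure (κ → ℝ)) :=
  indicatorConstLp 2 (measurableSet_orthantBox u) (volume_orthantBox_ne_top u) 1

lemma inner_orthantBoxL2 {u w : κ → ℝ} (hu : 0 ≤ u) (hw : 0 ≤ w) :
    inner ℝ (orthantBoxL2 u) (orthantBoxL2 w) = ∏ k, min (u k) (w k) := by
  rw [orthantBoxL2, orthantBoxL2, L2.inner_indicatorConstLp_one_indicatorConstLp_one _ _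
      (volume_orthantBox_ne_top u) (volume_orthantBox_ne_top w),
    orthantBox_inter, measureReal_def, volume_orthantBox, ENNReal.toReal_prod]
  exact Finset.prod_congr rfl fun k _ => ENNReal.toReal_ofReal (le_min (hu k) (hw k))

lemma coeFn_sum_smul_orthantBoxL2 (u : ι → κ → ℝ) (d : ι → ℝ) :
    ⇑(∑ a, d a • orthantBoxL2 (u a))
      =ᵐ[volume] fun x => ∑ a, d a * (orthantBox (u a)).indicator 1 x := by
  have h : ∀ᵐ x ∂volume, ∀ a,
      (d a • orthantBoxL2 (u a)) x = d a * (orthantBox (u a)).indicator 1 x := by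
    refine ae_all_iff.2 fun a => ?_
    filter_upwards [Lp.coeFn_smul (d a) (orthantBoxL2 (u a)),
      indicatorConstLp_coeFn (p := 2) (hs := measurableSet_orthantBox (u a))
        (hμs := volume_orthantBox_ne_top (u a)) (c := (1 : ℝ))]
      with x hsmul hind
    rw [hsmul, Pi.smul_apply, smul_eq_mul]
    exact congrArg (d a * ·) hind
  filter_upwards [Lp.coeFn_fun_finsetSum Finset.univ (fun a => d a • orthantBoxL2 (u a)), h]
    with x hsum hterm
  rw [hsum]
  exact Finset.sum_congr rfl fun a _ => hterm a

lemma exists_pos_corner_gap (u : ι → κ → ℝ) {a : ι} (ha : ∀ k, 0 < u a k) :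
    ∃ ε > 0, ∀ k, ε < u a k ∧ ∀ b, u b k < u a k → u b k < u a k - ε := by
  have h : ∀ᶠ ε in 𝓝[>] (0 : ℝ), ∀ k, ε < u a k ∧ ∀ b, u b k < u a k → u b k < u a k - ε := by
    refine eventually_all.2 fun k => ((eventually_lt_nhds (ha k)).filter_mono
      nhdsWithin_le_nhds).and (eventually_all.2 fun b => ?_)
    by_cases hb : u b k < u a k
    · filter_upwards [(eventually_lt_nhds (sub_pos.2 hb)).filter_mono nhdsWithin_le_nhds]
        with ε hε _
      linarith
    · exact .of_forall fun _ h => absurd h hb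
  obtain ⟨ε, hε, hε0⟩ := (h.and self_mem_nhdsWithin).exists
  exact ⟨ε, hε0, hε⟩

lemma linearIndependent_orthantBoxL2 {u : ι → κ → ℝ} (hu : Injective u)
    (hpos : ∀ a k, 0 < u a k) : LinearIndependent ℝ fun a => orthantBoxL2 (u a) := by
  rw [Fintype.linearIndependent_iff]
  intro d hd
  by_contra! hne
  obtain ⟨a, ha⟩ := (toFinite {b | d b ≠ 0}).exists_maximalFor u _ hne
  obtain ⟨ε, hε0, hε⟩ := exists_pos_corner_gap u (hpos a)
  have hzero : ∀ᵐ x ∂volume, ∑ b, d b * (orthantBox (u b)).indicator 1 x = 0 := by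
    filter_upwards [coeFn_sum_smul_orthantBoxL2 u d,
      Lp.coeFn_zero ℝ 2 (volume : Measure (κ → ℝ))] with x hsum hzero
    rw [← hsum, hd, hzero, Pi.zero_apply]
  have hnull : volume (univ.pi fun k => Ioo (u a k - ε) (u a k)) = 0 :=
    measure_mono_null
      (fun x hx => (sum_indicator_orthantBox_eq_of_maximalFor hu ha hε hx).trans_ne ha.1)
      (ae_iff.1 hzero)
  simp [Real.volume_pi_Ioo] at hnull
  exact absurd hnull.1 (not_le.2 hε0)

end OrthantBox

section LaplaceKernel

variable {κ ι : Type*} [Fintype κ] [Fintype ι]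

noncomputable def laplaceFeature (v : κ → ℝ) : Lp ℝ 2 (volume : Measure (κ → ℝ)) :=
  (∏ k, Real.exp (-v k)) • orthantBoxL2 fun k => Real.exp (2 * v k)

lemma Real.exp_neg_abs_sub (x y : ℝ) :
    Real.exp (-|x - y|) =
      Real.exp (-x) * Real.exp (-y) * min (Real.exp (2 * x)) (Real.exp (2 * y)) := by
  rw [← Real.exp_add, ← Real.exp_monotone.map_min, ← Real.exp_add]
  congr 1
  rcases le_total x y with h | h
  · rw [abs_of_nonpos (by linarith), min_eq_left (by linarith)]; ring
  · rw [abs_of_nonneg (by linarith), min_eq_right (by linarith)]; ring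

lemma exp_neg_d1_eq_inner {N : ℕ} (v w : Fin N → ℝ) :
    Real.exp (-d1 v w) = inner ℝ (laplaceFeature v) (laplaceFeature w) := by
  rw [laplaceFeature, laplaceFeature, real_inner_smul_left, real_inner_smul_right,
    inner_orthantBoxL2 (fun _ => (Real.exp_pos _).le) (fun _ => (Real.exp_pos _).le), d1,
    ← Finset.sum_neg_distrib, Real.exp_sum]
  simp only [Real.exp_neg_abs_sub, Finset.prod_mul_distrib]
  ring

lemma linearIndependent_laplaceFeature {v : ι → κ → ℝ} (hv : Injective v) :
    LinearIndependent ℝ fun a => laplaceFeature (v a) := by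
  have hu : Injective fun a k => Real.exp (2 * v a k) := fun a b h =>
    hv <| funext fun k => by simpa using congrFun h k
  exact (linearIndependent_orthantBoxL2 hu fun _ _ => Real.exp_pos _).units_smul
    fun a => Units.mk0 _ (Finset.prod_ne_zero_iff.2 fun _ _ => (Real.exp_pos _).ne')

theorem posDef_exp_neg_d1 {N : ℕ} {v : ι → Fin N → ℝ} (hv : Injective v) :
    (Matrix.of fun a b => Real.exp (-d1 (v a) (v b))).PosDef := by
  have hgram : (Matrix.of fun a b => Real.exp (-d1 (v a) (v b))) =
      gram ℝ fun a => laplaceFeature (v a) := by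
    ext a b
    rw [of_apply, gram_apply, exp_neg_d1_eq_inner]
  rw [hgram]
  exact posDef_gram_of_linearIndependent (linearIndependent_laplaceFeature hv)

end LaplaceKernel

section Vertices

variable {N : ℕ}

lemma sgnVec_injective : Injective (sgnVec (N := N)) := fun s s' h => funext fun k => by
  have hk := congrFun h k
  revert hk
  unfold sgnVec
  cases s k <;> cases s' k <;> norm_num

lemma abs_sgnVec_sub_sgnVec_le (s s' : Fin N → Bool) (k : Fin N) :
    |sgnVec s k - sgnVec s' k| ≤ 2 := by
  unfold sgnVec
  split_ifs <;> norm_num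

lemma lt_abs_sub_of_ofReal_lt_skewness {S : Set (Fin N → ℝ)} {c : ℝ}
    (h : ENNReal.ofReal c < skewness S) {a b : Fin N → ℝ} (ha : a ∈ S) (hb : b ∈ S)
    (hab : a ≠ b) (k : Fin N) : c < |a k - b k| :=
  (ENNReal.ofReal_lt_ofReal_iff'.1 <| h.trans_le <| iInf_le_of_le ⟨a, ha⟩ <|
    iInf_le_of_le ⟨b, hb⟩ <| iInf_le_of_le (by simpa using hab) <| iInf_le _ k).1

lemma eq_and_eq_of_add_smul_sgnVec_eq {S : Set (Fin N → ℝ)} {r : ℝ} (hr : 0 < r)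
    (hr' : ENNReal.ofReal (2 * r) < skewness S) {p p' : Fin N → ℝ} (hp : p ∈ S) (hp' : p' ∈ S)
    {s s' : Fin N → Bool} (h : p + r • sgnVec s = p' + r • sgnVec s') : p = p' ∧ s = s' := by
  obtain rfl : p = p' := by
    by_contra hne
    obtain ⟨k, hk⟩ := Function.ne_iff.1 hne
    have hdiff : p k - p' k = r * (sgnVec s' k - sgnVec s k) := by
      have := congrFun h k
      simp only [Pi.add_apply, Pi.smul_apply, smul_eq_mul] at this
      linarith
    have hsep := lt_abs_sub_of_ofReal_lt_skewness hr' hp hp' hne k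
    rw [hdiff, abs_mul, abs_of_pos hr] at hsep
    nlinarith [abs_sgnVec_sub_sgnVec_le s' s k]
  exact ⟨rfl, sgnVec_injective (smul_right_injective _ hr.ne' (add_left_cancel h))⟩

variable (F : Finset (Fin N → ℝ)) (r : ℝ)

noncomputable def vertexMatrix :
    Matrix ({p // p ∈ F} × (Fin N → Bool)) ({p // p ∈ F} × (Fin N → Bool)) ℝ :=
  Matrix.of fun a b => Real.exp (-d1 ((a.1 : Fin N → ℝ) + r • sgnVec a.2)
    ((b.1 : Fin N → ℝ) + r • sgnVec b.2))

noncomputable def vertexRhs (b : {p // p ∈ F} × (Fin N → Bool)) : ℝ :=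
  ∑ p ∈ F.erase b.1, Real.exp (-d1Inf (cube p r) ((b.1 : Fin N → ℝ) + r • sgnVec b.2))

lemma vertexSystem_iff_vecMul (x : (Fin N → ℝ) → (Fin N → Bool) → ℝ) :
    VertexSystem F r x ↔
      (fun a : {p // p ∈ F} × (Fin N → Bool) => x a.1 a.2) ᵥ* vertexMatrix F r = vertexRhs F r := by
  simp only [VertexSystem, funext_iff, Prod.forall, Subtype.forall]
  refine forall₂_congr fun q _ => forall_congr' fun t => ?_
  rw [vecMul, dotProduct, Fintype.sum_prod_type, ← Finset.sum_coe_sort F]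
  rfl

end Vertices

theorem stmt8_general {N : ℕ} (F : Finset (Fin N → ℝ))
    (r : ℝ) (hr : 0 < r)
    (hr' : ENNReal.ofReal (2 * r) < skewness (F : Set (Fin N → ℝ))) :
    -- the `2^N · |F|` vertices are pairwise distinct
    (∀ p ∈ F, ∀ p' ∈ F, ∀ s s' : Fin N → Bool,
        p + r • sgnVec s = p' + r • sgnVec s' → p = p' ∧ s = s') ∧
    -- the coefficient matrix of the Vertex System, i.e. the similarity matrix of the
    -- vertex set, is positive definite
    (Matrix.of fun a b : {p // p ∈ F} × (Fin N → Bool) =>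
        Real.exp (-d1 ((a.1 : Fin N → ℝ) + r • sgnVec a.2)
          ((b.1 : Fin N → ℝ) + r • sgnVec b.2))).PosDef ∧
    -- consequently, the Vertex System has a unique solution
    (∃ x, VertexSystem F r x) ∧
    (∀ x y, VertexSystem F r x → VertexSystem F r y → ∀ p ∈ F, ∀ s : Fin N → Bool,
        x p s = y p s) := by
  have hvertex : ∀ p ∈ F, ∀ p' ∈ F, ∀ s s' : Fin N → Bool,
      p + r • sgnVec s = p' + r • sgnVec s' → p = p' ∧ s = s' :=
    fun p hp p' hp' s s' => eq_and_eq_of_add_smul_sgnVec_eq hr hr' hp hp'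
  have hA : (vertexMatrix F r).PosDef :=
    posDef_exp_neg_d1 (v := fun a : {p // p ∈ F} × (Fin N → Bool) =>
      (a.1 : Fin N → ℝ) + r • sgnVec a.2) fun a b h => by
        obtain ⟨hp, hs⟩ := hvertex _ a.1.2 _ b.1.2 _ _ h
        exact Prod.ext (Subtype.ext hp) hs
  refine ⟨hvertex, hA, ?_, fun x y hx hy p hp s => ?_⟩
  · obtain ⟨c, hc⟩ := vecMul_surjective_iff_isUnit.2 hA.isUnit (vertexRhs F r)
    refine ⟨fun p s => if h : p ∈ F then c (⟨p, h⟩, s) else 0,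
      (vertexSystem_iff_vecMul F r _).2 ?_⟩
    simpa using hc
  · have hxy := vecMul_injective_iff_isUnit.2 hA.isUnit <|
      ((vertexSystem_iff_vecMul F r x).1 hx).trans ((vertexSystem_iff_vecMul F r y).1 hy).symm
    exact congrFun hxy (⟨p, hp⟩, s)

theorem stmt8 {N : ℕ} (F : Finset (Fin N → ℝ)) (hF : F.Nonempty)
    (hskew : IsSkew (F : Set (Fin N → ℝ)))
    (r : ℝ) (hr : 0 < r)
    (hr' : ENNReal.ofReal (2 * r) < skewness (F : Set (Fin N → ℝ))) :
    -- the `2^N · |F|` vertices are pairwise distinct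
    (∀ p ∈ F, ∀ p' ∈ F, ∀ s s' : Fin N → Bool,
        p + r • sgnVec s = p' + r • sgnVec s' → p = p' ∧ s = s') ∧
    -- the coefficient matrix of the Vertex System, i.e. the similarity matrix of the
    -- vertex set, is positive definite
    (Matrix.of fun a b : {p // p ∈ F} × (Fin N → Bool) =>
        Real.exp (-d1 ((a.1 : Fin N → ℝ) + r • sgnVec a.2)
          ((b.1 : Fin N → ℝ) + r • sgnVec b.2))).PosDef ∧
    -- consequently, the Vertex System has a unique solution
    (∃ x, VertexSystem F r x) ∧
    (∀ x y, VertexSystem F r x → VertexSystem F r y → ∀ p ∈ F, ∀ s : Fin N → Bool,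
        x p s = y p s) :=
  stmt8_general F r hr hr'
end

section
/- Let N ∈ ℕ, let F be a nonempty skew finite subset of ℓ1^N, let r ∈ (0, skew(F)/2), and let (α_{p,s}(r))_{p∈F, s∈{−1,1}^N} be the unique solution of the Vertex System. Then for every q ∈ F and every t ∈ [−1,1]^N, (1/2^N) Σ_{p∈F} ∫_{ℝ^N} e^{−d1(x, q+rt)} dμ_{p,r}(x) − Σ_{p∈F, s∈{−1,1}^N} α_{p,s}(r) e^{−d1(p+rs, q+rt)} = 1. (Since every point of C̄_F(r) has the form q + rt with q ∈ F and t ∈ [−1,1]^N, this says that the signed measure (1/2^N) Σ_p μ_{p,r} − Σ_{p,s} α_{p,s}(r) δ_{p+rs} is a weight measure of C̄_F(r).) -/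
open MeasureTheory Metric Set Filter Topology
open scoped ENNReal Classical

/-- The product measure `⊗_k (δ_{p_k - r} + δ_{p_k + r} + Leb|_{[p_k - r, p_k + r]})`. -/
noncomputable def cubeMeasure {N : ℕ} (p : Fin N → ℝ) (r : ℝ) :
    Measure (Fin N → ℝ) :=
  Measure.pi fun k =>
    Measure.dirac (p k - r) + Measure.dirac (p k + r) +
      volume.restrict (Set.Icc (p k - r) (p k + r))

/-!
Integrating coordinatewise, `∫ e^{-|u - y|} d(δ_a + δ_b + λ|[a,b]) = 2 e^{-dist(y, [a,b])}`, so
the first term is `∑_p e^{-d1(cube p r, y)}`, whose summand `p = q` is `1` for `y ∈ cube q r`.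
It remains to show that `∑_{p ≠ q} e^{-d1(cube p r, y)}` and `∑ α_{p,s} e^{-d1(p + r s, y)}` agree
on `cube q r`. Since `r < skew(F)/2`, in every coordinate the points `p + r s` and the cubes
`cube p r` (`p ≠ q`) lie outside the open slab of `cube q r`, so on that cube both sides are, in
each coordinate, combinations of `e^{y_k}` and `e^{-y_k}`. Such functions are determined by their
values at the `2^N` vertices (through `sinh` weights), and there the two sides agree by the
Vertex System.
-/

lemma exp_neg_d1 {N : ℕ} (x y : Fin N → ℝ) :
    Real.exp (-d1 x y) = ∏ k, Real.exp (-|x k - y k|) := by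
  rw [d1, ← Finset.sum_neg_distrib, Real.exp_sum]

lemma abs_max_min_sub_le {a b y z : ℝ} (hz : z ∈ Icc a b) :
    |max a (min b y) - y| ≤ |z - y| := by
  obtain ⟨hza, hzb⟩ := hz
  rcases le_total y a with hya | hay
  · rw [max_eq_left ((min_le_right b y).trans hya), abs_of_nonneg (by linarith),
      abs_of_nonneg (by linarith)]
    linarith
  rcases le_total y b with hyb | hby
  · rw [min_eq_right hyb, max_eq_right hay, sub_self, abs_zero]
    exact abs_nonneg _
  · rw [min_eq_left hby, max_eq_right (hza.trans hzb), abs_of_nonpos (by linarith),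
      abs_of_nonpos (by linarith)]
    linarith

section Cube

variable {N : ℕ}

lemma sgnVec_mem_Icc (τ : Fin N → Bool) (k : Fin N) : sgnVec τ k ∈ Icc (-1 : ℝ) 1 := by
  unfold sgnVec; split_ifs <;> norm_num

lemma abs_sgnVec (τ : Fin N → Bool) (k : Fin N) : |sgnVec τ k| = 1 := by
  unfold sgnVec; split_ifs <;> norm_num

lemma add_smul_mem_cube {q t : Fin N → ℝ} {r : ℝ} (hr : 0 ≤ r)
    (ht : ∀ k, t k ∈ Icc (-1 : ℝ) 1) : q + r • t ∈ cube q r := fun k => by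
  obtain ⟨ht₁, ht₂⟩ := ht k
  simp only [Pi.add_apply, Pi.smul_apply, smul_eq_mul, mem_Icc]
  constructor <;> nlinarith

def cubeProj (p : Fin N → ℝ) (r : ℝ) (y : Fin N → ℝ) : Fin N → ℝ :=
  fun k => max (p k - r) (min (p k + r) (y k))

lemma cubeProj_mem_cube (p y : Fin N → ℝ) {r : ℝ} (hr : 0 ≤ r) :
    cubeProj p r y ∈ cube p r := fun k =>
  ⟨le_max_left _ _, max_le (by linarith) (min_le_left _ _)⟩

lemma d1Inf_cube {p : Fin N → ℝ} {r : ℝ} (hr : 0 ≤ r) (y : Fin N → ℝ) :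
    d1Inf (cube p r) y = d1 (cubeProj p r y) y := by
  refine IsLeast.csInf_eq ⟨⟨_, cubeProj_mem_cube p y hr, rfl⟩, ?_⟩
  rintro _ ⟨z, hz, rfl⟩
  exact Finset.sum_le_sum fun k _ => abs_max_min_sub_le (hz k)

lemma d1Inf_cube_of_mem {p y : Fin N → ℝ} {r : ℝ} (hr : 0 ≤ r) (hy : y ∈ cube p r) :
    d1Inf (cube p r) y = 0 := by
  rw [d1Inf_cube hr]
  refine Finset.sum_eq_zero fun k _ => ?_
  rw [cubeProj, min_eq_right (hy k).2, max_eq_right (hy k).1, sub_self, abs_zero]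

lemma cubeProj_eq_of_separated {p q y : Fin N → ℝ} {r : ℝ} (hy : y ∈ cube q r)
    (hpq : ∀ k, 2 * r < |p k - q k|) : cubeProj p r y = cubeProj p r q := by
  funext k
  have ⟨hy₁, hy₂⟩ := hy k
  rcases lt_abs.1 (hpq k) with h | h
  · simp only [cubeProj, min_eq_right (show y k ≤ p k + r by linarith),
      min_eq_right (show q k ≤ p k + r by linarith), max_eq_left (show y k ≤ p k - r by linarith),
      max_eq_left (show q k ≤ p k - r by linarith)]
  · simp only [cubeProj, min_eq_left (show p k + r ≤ y k by linarith),
      min_eq_left (show p k + r ≤ q k by linarith)]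

lemma le_abs_sub_of_mem_cube {p q c : Fin N → ℝ} {r : ℝ} (hc : c ∈ cube p r) (k : Fin N)
    (hpq : 2 * r ≤ |p k - q k|) : r ≤ |c k - q k| := by
  have hcp : |p k - c k| ≤ r := abs_sub_le_iff.2 ⟨by linarith [(hc k).1], by linarith [(hc k).2]⟩
  linarith [abs_sub_le (p k) (c k) (q k)]

end Cube

/-- `expWeight r u` and `expWeight r (-u)` form the Lagrange basis of `span {e^{ru}, e^{-ru}}`
for the nodes `u = 1` and `u = -1`. -/
noncomputable def expWeight (r u : ℝ) : ℝ := Real.sinh (r * (1 + u)) / Real.sinh (2 * r)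

lemma exp_combination_eq_expWeight {r : ℝ} (hr : 0 < r) (a b u : ℝ) :
    a * Real.exp (r * u) + b * Real.exp (-(r * u)) =
      expWeight r u * (a * Real.exp r + b * Real.exp (-r)) +
        expWeight r (-u) * (a * Real.exp (-r) + b * Real.exp r) := by
  have h2r : Real.sinh (2 * r) ≠ 0 := (Real.sinh_pos_iff.2 (by linarith)).ne'
  simp only [expWeight, div_mul_eq_mul_div, ← add_div]
  rw [eq_div_iff h2r]
  simp only [Real.sinh_eq, mul_add, mul_one, mul_neg, Real.exp_add, Real.exp_neg,
    show 2 * r = r + r by ring]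
  field_simp
  ring

lemma exists_exp_combination {r c : ℝ} (hr : 0 ≤ r) (hc : r ≤ |c|) :
    ∃ a b : ℝ, ∀ u ∈ Icc (-1 : ℝ) 1,
      Real.exp (-|c - r * u|) = a * Real.exp (r * u) + b * Real.exp (-(r * u)) := by
  rcases le_abs'.1 hc with hc | hc
  · refine ⟨0, Real.exp c, fun u ⟨hu₁, hu₂⟩ => ?_⟩
    rw [abs_of_nonpos (by nlinarith), ← Real.exp_add]
    ring_nf
  · refine ⟨Real.exp (-c), 0, fun u ⟨hu₁, hu₂⟩ => ?_⟩
    rw [abs_of_nonneg (by nlinarith), ← Real.exp_add]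
    ring_nf

lemma exp_neg_abs_sub_eq_sum_expWeight {r c q u : ℝ} (hr : 0 < r) (hc : r ≤ |c - q|)
    (hu : u ∈ Icc (-1 : ℝ) 1) :
    Real.exp (-|c - (q + r * u)|) =
      ∑ b : Bool, expWeight r ((if b then 1 else -1) * u) *
        Real.exp (-|c - (q + r * if b then 1 else -1)|) := by
  obtain ⟨a, b, hab⟩ := exists_exp_combination hr.le hc
  have hmem : ∀ v ∈ Icc (-1 : ℝ) 1, Real.exp (-|c - (q + r * v)|) =
      a * Real.exp (r * v) + b * Real.exp (-(r * v)) := fun v hv => by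
    rw [← hab v hv, sub_add_eq_sub_sub]
  simp only [Fintype.sum_bool, if_true, Bool.false_eq_true, if_false, one_mul, neg_one_mul]
  rw [hmem u hu, hmem 1 (by norm_num), hmem (-1) (by norm_num), mul_one, mul_neg_one,
    exp_combination_eq_expWeight hr, neg_neg]

section VertexInterpolation

variable {N : ℕ}

noncomputable def vertexWeight (r : ℝ) (t : Fin N → ℝ) (τ : Fin N → Bool) : ℝ :=
  ∏ k, expWeight r (sgnVec τ k * t k)

def IsVertexInterpolant (q : Fin N → ℝ) (r : ℝ) (f : (Fin N → ℝ) → ℝ) : Prop :=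
  ∀ t : Fin N → ℝ, (∀ k, t k ∈ Icc (-1 : ℝ) 1) →
    f (q + r • t) = ∑ τ : Fin N → Bool, vertexWeight r t τ * f (q + r • sgnVec τ)

lemma isVertexInterpolant_exp_neg_d1 {q c : Fin N → ℝ} {r : ℝ} (hr : 0 < r)
    (hc : ∀ k, r ≤ |c k - q k|) : IsVertexInterpolant q r fun y => Real.exp (-d1 c y) := by
  intro t ht
  simp only [exp_neg_d1, vertexWeight, ← Finset.prod_mul_distrib]
  simp only [Pi.add_apply, Pi.smul_apply, smul_eq_mul,
    fun k => exp_neg_abs_sub_eq_sum_expWeight hr (hc k) (ht k)]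
  exact Fintype.prod_sum _

lemma IsVertexInterpolant.sum {ι : Type*} {q : Fin N → ℝ} {r : ℝ} (s : Finset ι)
    {f : ι → (Fin N → ℝ) → ℝ} (hf : ∀ i ∈ s, IsVertexInterpolant q r (f i)) :
    IsVertexInterpolant q r fun y => ∑ i ∈ s, f i y := by
  intro t ht
  simp only [Finset.mul_sum]
  rw [Finset.sum_comm]
  exact Finset.sum_congr rfl fun i hi => hf i hi t ht

lemma IsVertexInterpolant.const_mul {q : Fin N → ℝ} {r : ℝ} {f : (Fin N → ℝ) → ℝ}
    (hf : IsVertexInterpolant q r f) (a : ℝ) : IsVertexInterpolant q r fun y => a * f y := by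
  intro t ht
  simp only [hf t ht, Finset.mul_sum]
  exact Finset.sum_congr rfl fun τ _ => by ring

lemma IsVertexInterpolant.congr {q : Fin N → ℝ} {r : ℝ} (hr : 0 ≤ r)
    {f g : (Fin N → ℝ) → ℝ} (hf : IsVertexInterpolant q r f) (hfg : EqOn f g (cube q r)) :
    IsVertexInterpolant q r g := by
  intro t ht
  rw [← hfg (add_smul_mem_cube hr ht), hf t ht]
  exact Finset.sum_congr rfl fun τ _ => by
    rw [hfg (add_smul_mem_cube hr (sgnVec_mem_Icc τ))]

lemma IsVertexInterpolant.eq_of_eq_on_vertices {q : Fin N → ℝ} {r : ℝ}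
    {f g : (Fin N → ℝ) → ℝ} (hf : IsVertexInterpolant q r f) (hg : IsVertexInterpolant q r g)
    (hfg : ∀ τ, f (q + r • sgnVec τ) = g (q + r • sgnVec τ)) {t : Fin N → ℝ}
    (ht : ∀ k, t k ∈ Icc (-1 : ℝ) 1) : f (q + r • t) = g (q + r • t) := by
  simp only [hf t ht, hg t ht, hfg]

end VertexInterpolation

lemma integral_exp_neg_abs_sub_of_le {a b y : ℝ} (hya : y ≤ a) (hab : a ≤ b) :
    ∫ u in a..b, Real.exp (-|u - y|) = Real.exp (y - a) - Real.exp (y - b) := by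
  rw [intervalIntegral.integral_congr (g := fun u => Real.exp (y - u)) fun u hu => by
      rw [uIcc_of_le hab] at hu
      simp only [abs_of_nonneg (by linarith [hu.1] : 0 ≤ u - y), neg_sub],
    intervalIntegral.integral_comp_sub_left, integral_exp]

lemma integral_exp_neg_abs_sub_of_ge {a b y : ℝ} (hby : b ≤ y) (hab : a ≤ b) :
    ∫ u in a..b, Real.exp (-|u - y|) = Real.exp (b - y) - Real.exp (a - y) := by
  rw [intervalIntegral.integral_congr (g := fun u => Real.exp (u - y)) fun u hu => by
      rw [uIcc_of_le hab] at hu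
      simp only [abs_of_nonpos (by linarith [hu.2] : u - y ≤ 0), neg_neg],
    intervalIntegral.integral_comp_sub_right, integral_exp]

noncomputable def intervalMeasure (a b : ℝ) : Measure ℝ :=
  Measure.dirac a + Measure.dirac b + volume.restrict (Icc a b)

instance (a b : ℝ) : IsFiniteMeasure (intervalMeasure a b) := by
  unfold intervalMeasure; infer_instance

lemma integrable_exp_neg_abs_sub (μ : Measure ℝ) [IsFiniteMeasure μ] (y : ℝ) :
    Integrable (fun u => Real.exp (-|u - y|)) μ :=
  Integrable.of_bound (by fun_prop) 1 <| .of_forall fun u => by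
    rw [Real.norm_eq_abs, abs_of_pos (Real.exp_pos _), Real.exp_le_one_iff, neg_nonpos]
    exact abs_nonneg _

lemma integral_exp_neg_abs_sub_intervalMeasure {a b : ℝ} (hab : a ≤ b) (y : ℝ) :
    ∫ u, Real.exp (-|u - y|) ∂intervalMeasure a b = 2 * Real.exp (-|max a (min b y) - y|) := by
  have hint := integrable_exp_neg_abs_sub
  rw [intervalMeasure, integral_add_measure (hint _ y) (hint _ y),
    integral_add_measure (hint _ y) (hint _ y), integral_dirac, integral_dirac,
    integral_Icc_eq_integral_Ioc, ← intervalIntegral.integral_of_le hab]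
  rcases le_total y a with hya | hay
  · rw [integral_exp_neg_abs_sub_of_le hya hab, max_eq_left ((min_le_right b y).trans hya),
      abs_of_nonneg (by linarith : 0 ≤ a - y), abs_of_nonneg (by linarith : 0 ≤ b - y)]
    ring_nf
  rcases le_total y b with hyb | hby
  · have hcont : Continuous fun u => Real.exp (-|u - y|) := by fun_prop
    rw [← intervalIntegral.integral_add_adjacent_intervals (hcont.intervalIntegrable a y)
        (hcont.intervalIntegrable y b),
      integral_exp_neg_abs_sub_of_ge le_rfl hay, integral_exp_neg_abs_sub_of_le le_rfl hyb,
      min_eq_right hyb, max_eq_right hay, abs_of_nonpos (by linarith : a - y ≤ 0),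
      abs_of_nonneg (by linarith : 0 ≤ b - y)]
    simp only [sub_self, abs_zero, neg_zero, Real.exp_zero, neg_sub]
    ring
  · rw [integral_exp_neg_abs_sub_of_ge hby hab, min_eq_left hby, max_eq_right hab,
      abs_of_nonpos (by linarith : a - y ≤ 0), abs_of_nonpos (by linarith : b - y ≤ 0)]
    ring_nf

lemma integral_exp_neg_d1_cubeMeasure {N : ℕ} (p : Fin N → ℝ) {r : ℝ} (hr : 0 ≤ r)
    (y : Fin N → ℝ) :
    ∫ x, Real.exp (-d1 x y) ∂cubeMeasure p r = 2 ^ N * Real.exp (-d1Inf (cube p r) y) := by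
  have hcube : cubeMeasure p r = Measure.pi fun k => intervalMeasure (p k - r) (p k + r) := rfl
  simp only [exp_neg_d1, hcube]
  rw [integral_fintype_prod_eq_prod (fun k u => Real.exp (-|u - y k|)), Finset.prod_congr rfl fun k _ =>
      integral_exp_neg_abs_sub_intervalMeasure (by linarith : p k - r ≤ p k + r) (y k),
    Finset.prod_mul_distrib, Finset.prod_const, Finset.card_univ, Fintype.card_fin,
    d1Inf_cube hr, exp_neg_d1]
  rfl

lemma lt_abs_sub_of_lt_skewness {N : ℕ} {S : Set (Fin N → ℝ)} {a b : Fin N → ℝ} (ha : a ∈ S)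
    (hb : b ∈ S) (hab : a ≠ b) {ε : ℝ} (hε : ENNReal.ofReal ε < skewness S) (k : Fin N) :
    ε < |a k - b k| := by
  have hle : skewness S ≤ ENNReal.ofReal |a k - b k| :=
    iInf_le_of_le ⟨a, ha⟩ <| iInf_le_of_le ⟨b, hb⟩ <|
      iInf_le_of_le (by simpa using hab) <| iInf_le _ k
  exact ((ENNReal.ofReal_lt_ofReal_iff').1 (hε.trans_le hle)).1

lemma VertexSystem.eq_on_cube {N : ℕ} {F : Finset (Fin N → ℝ)} {r : ℝ}
    {α : (Fin N → ℝ) → (Fin N → Bool) → ℝ} (hα : VertexSystem F r α) (hr : 0 < r)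
    {q : Fin N → ℝ} (hq : q ∈ F) (hsep : ∀ p ∈ F, p ≠ q → ∀ k, 2 * r < |p k - q k|)
    {t : Fin N → ℝ} (ht : ∀ k, t k ∈ Icc (-1 : ℝ) 1) :
    ∑ p ∈ F, ∑ s : Fin N → Bool, α p s * Real.exp (-d1 (p + r • sgnVec s) (q + r • t)) =
      ∑ p ∈ F.erase q, Real.exp (-d1Inf (cube p r) (q + r • t)) := by
  refine IsVertexInterpolant.eq_of_eq_on_vertices
    (f := fun y => ∑ p ∈ F, ∑ s, α p s * Real.exp (-d1 (p + r • sgnVec s) y))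
    (g := fun y => ∑ p ∈ F.erase q, Real.exp (-d1Inf (cube p r) y)) ?_ ?_ (hα q hq) ht
  · refine .sum F fun p hp => .sum _ fun s _ => .const_mul (isVertexInterpolant_exp_neg_d1 hr ?_) _
    intro k
    by_cases hpq : p = q
    · subst hpq
      simp only [Pi.add_apply, Pi.smul_apply, smul_eq_mul, add_sub_cancel_left, abs_mul,
        abs_sgnVec, abs_of_pos hr, mul_one, le_refl]
    · exact le_abs_sub_of_mem_cube (add_smul_mem_cube hr.le (sgnVec_mem_Icc s)) k
        (hsep p hp hpq k).le
  · refine .sum _ fun p hp => ?_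
    have hsep' := hsep p (Finset.mem_of_mem_erase hp) (Finset.ne_of_mem_erase hp)
    refine (isVertexInterpolant_exp_neg_d1 hr fun k =>
      le_abs_sub_of_mem_cube (cubeProj_mem_cube p q hr.le) k (hsep' k).le).congr hr.le ?_
    intro y hy
    simp only [d1Inf_cube hr.le, cubeProj_eq_of_separated hy hsep']

theorem stmt10_general {N : ℕ} (F : Finset (Fin N → ℝ))
    (r : ℝ) (hr : 0 < r)
    (hr' : ENNReal.ofReal (2 * r) < skewness (F : Set (Fin N → ℝ)))
    (α : (Fin N → ℝ) → (Fin N → Bool) → ℝ) (hα : VertexSystem F r α)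
    (q : Fin N → ℝ) (hq : q ∈ F)
    (t : Fin N → ℝ) (ht : ∀ k, t k ∈ Set.Icc (-1 : ℝ) 1) :
    (1 / 2 ^ N) * (∑ p ∈ F, ∫ x, Real.exp (-d1 x (q + r • t)) ∂(cubeMeasure p r)) -
      (∑ p ∈ F, ∑ s : Fin N → Bool,
        α p s * Real.exp (-d1 (p + r • sgnVec s) (q + r • t))) = 1 := by
  have hsep : ∀ p ∈ F, p ≠ q → ∀ k, 2 * r < |p k - q k| := fun p hp hpq =>
    lt_abs_sub_of_lt_skewness hp hq hpq hr'
  rw [Finset.sum_congr rfl fun p _ => integral_exp_neg_d1_cubeMeasure p hr.le _,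
    ← Finset.mul_sum, ← Finset.add_sum_erase F _ hq,
    d1Inf_cube_of_mem hr.le (add_smul_mem_cube hr.le ht), hα.eq_on_cube hr hq hsep ht]
  field_simp
  simp

theorem stmt10 {N : ℕ} (F : Finset (Fin N → ℝ)) (hF : F.Nonempty)
    (hskew : IsSkew (F : Set (Fin N → ℝ)))
    (r : ℝ) (hr : 0 < r)
    (hr' : ENNReal.ofReal (2 * r) < skewness (F : Set (Fin N → ℝ)))
    (α : (Fin N → ℝ) → (Fin N → Bool) → ℝ) (hα : VertexSystem F r α)
    (q : Fin N → ℝ) (hq : q ∈ F)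
    (t : Fin N → ℝ) (ht : ∀ k, t k ∈ Set.Icc (-1 : ℝ) 1) :
    (1 / 2 ^ N) * (∑ p ∈ F, ∫ x, Real.exp (-d1 x (q + r • t)) ∂(cubeMeasure p r)) -
      (∑ p ∈ F, ∑ s : Fin N → Bool,
        α p s * Real.exp (-d1 (p + r • sgnVec s) (q + r • t))) = 1 :=
  stmt10_general F r hr hr' α hα q hq t ht
end
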